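/- arXiv:math/0306358 — 7 statements merged into one kernel-verified Lean document; each statement's English description precedes it below -/
import Mathlib

section
/- Let R be a commutative ring, let P=(A,C) and Q=(B,D) be measuring R-pairings, and let ξ: A → B and θ: D → C be R-linear maps satisfying ⟨ξ(a),d⟩_Q = ⟨a,θ(d)⟩_P for all a ∈ A and d ∈ D. Assume the canonical R-linear map χ: C ⊗_R C → (A ⊗_R A)^*, determined by χ(c ⊗ c')(a ⊗ a') = ⟨a,c⟩⟨a',c'⟩, is injective. If ξ is a morphism of R-algebras, then θ is a morphism of R-coalgebras, i.e. Δ_C(θ(d)) = (θ ⊗ θ)(Δ_D(d)) and ε_C(θ(d)) = ε_D(d) for all d ∈ D. -/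
open TensorProduct

/-- A bilinear pairing `β : A × C → R` between an `R`-algebra `A` and an `R`-coalgebra `C`
is *measuring* if the induced map `A → C^*` is a morphism of `R`-algebras, where `C^*`
carries the convolution product `(f ⋆ g)(c) = Σ f(c₁) g(c₂)` and unit `ε_C`. -/
def IsMeasuring (R : Type*) {A C : Type*} [CommRing R] [Ring A] [Algebra R A]
    [AddCommGroup C] [Module R C] [Coalgebra R C]
    (β : A →ₗ[R] C →ₗ[R] R) : Prop :=
  (∀ a a' : A, β (a * a') =
      (LinearMap.mul' R R) ∘ₗ (TensorProduct.map (β a) (β a')) ∘ₗ Coalgebra.comul) ∧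
  β 1 = Coalgebra.counit

theorem measuring_pairing_dual_of_algHom
    {R A B C D : Type*} [CommRing R] [Nontrivial R]
    [Ring A] [Algebra R A] [Ring B] [Algebra R B]
    [AddCommGroup C] [Module R C] [Coalgebra R C]
    [AddCommGroup D] [Module R D] [Coalgebra R D]
    (βP : A →ₗ[R] C →ₗ[R] R) (βQ : B →ₗ[R] D →ₗ[R] R)
    (hP : IsMeasuring R βP) (hQ : IsMeasuring R βQ)
    (ξ : A →ₗ[R] B) (θ : D →ₗ[R] C)
    (hcomp : ∀ (a : A) (d : D), βQ (ξ a) d = βP a (θ d))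
    -- the canonical map `χ : C ⊗ C → (A ⊗ A)^*`, `χ(c ⊗ c')(a ⊗ a') = ⟨a,c⟩⟨a',c'⟩`,
    -- is injective
    (hχ : Function.Injective
      ((TensorProduct.dualDistrib R A A) ∘ₗ (TensorProduct.map βP.flip βP.flip)))
    -- `ξ` is a morphism of `R`-algebras
    (hξmul : ∀ a a' : A, ξ (a * a') = ξ a * ξ a') (hξone : ξ 1 = 1) :
    -- `θ` is a morphism of `R`-coalgebras
    (∀ d : D, Coalgebra.comul (R := R) (θ d) = TensorProduct.map θ θ (Coalgebra.comul d)) ∧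
    (∀ d : D, Coalgebra.counit (R := R) (θ d) = Coalgebra.counit (R := R) d) := by
  have key : ∀ (a a' : A) (t : C ⊗[R] C),
      ((TensorProduct.dualDistrib R A A) ∘ₗ (TensorProduct.map βP.flip βP.flip)) t (a ⊗ₜ a')
        = LinearMap.mul' R R (TensorProduct.map (βP a) (βP a') t) := by
    intro a a' t
    induction t using TensorProduct.induction_on with
    | zero => simp
    | tmul c c' => simp [TensorProduct.dualDistrib_apply]
    | add x y hx hy => simp only [map_add, LinearMap.add_apply, hx, hy]
  constructor
  · intro d
    apply hχ
    refine TensorProduct.ext' fun a a' => ?_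
    rw [key, key]
    have h1 : LinearMap.mul' R R (TensorProduct.map (βP a) (βP a')
        (Coalgebra.comul (θ d))) = βP (a * a') (θ d) :=
      (LinearMap.congr_fun (hP.1 a a') (θ d)).symm
    have hθ : ∀ x : A, (βP x) ∘ₗ θ = βQ (ξ x) := fun x =>
      LinearMap.ext fun d => (hcomp x d).symm
    have h2 : TensorProduct.map (βP a) (βP a')
        (TensorProduct.map θ θ (Coalgebra.comul d))
        = TensorProduct.map (βQ (ξ a)) (βQ (ξ a')) (Coalgebra.comul d) := by
      rw [← LinearMap.comp_apply, ← TensorProduct.map_comp, hθ, hθ]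
    rw [h1, h2, ← hcomp, hξmul]
    exact LinearMap.congr_fun (hQ.1 (ξ a) (ξ a')) d
  · intro d
    rw [← hP.2, ← hcomp, hξone, hQ.2]
end

section
/- Let R be a noetherian commutative ring and P=(A,C) a measuring R-pairing satisfying the α-condition. Let A° = {f ∈ A^* : f(I) = 0 for some two-sided ideal I of A with A/I finitely generated as an R-module}, regarded as a left A-submodule of A^* via (a·f)(ã) = f(ã a). If every f ∈ A° admits finitely many f_1,…,f_n ∈ A° and c_1,…,c_n ∈ C with a·f = Σ_i ⟨a,c_i⟩ f_i for all a ∈ A (i.e. the left A-module A° is C-rational), then χ_P(C) = A°, where χ_P(c) = ⟨-,c⟩. -/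
open TensorProduct

/-- For a pairing `β : V × W → R` and an `R`-module `M`, the canonical map
`α_M : M ⊗ W → Hom_R(V,M)`, `m ⊗ w ↦ (v ↦ ⟨v,w⟩ • m)`. -/
noncomputable def pairingAlpha (R : Type*) {V W : Type*} (M : Type*) [CommRing R]
    [AddCommGroup V] [Module R V] [AddCommGroup W] [Module R W]
    [AddCommGroup M] [Module R M] (β : V →ₗ[R] W →ₗ[R] R) :
    M ⊗[R] W →ₗ[R] (V →ₗ[R] M) :=
  (dualTensorHom R V M) ∘ₗ (TensorProduct.comm R M (Module.Dual R V)).toLinearMap ∘ₗ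
    (TensorProduct.map LinearMap.id β.flip)

/-- A pairing `β : V × W → R` satisfies the `α`-condition if the canonical map
`α_M : M ⊗ W → Hom_R(V,M)` is injective for every `R`-module `M`. -/
def IsAlphaPairing {R V W : Type*} [CommRing R]
    [AddCommGroup V] [Module R V] [AddCommGroup W] [Module R W]
    (β : V →ₗ[R] W →ₗ[R] R) : Prop :=
  ∀ (M : Type*) [AddCommGroup M] [Module R M],
    Function.Injective (pairingAlpha R M β)

/-- `A° = {f ∈ A^* : f(I) = 0` for some two-sided ideal `I` of `A` with `A/I`
finitely generated as an `R`-module `}`. -/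
def finiteDual (R : Type*) (A : Type*) [CommRing R] [Ring A] [Algebra R A] :
    Set (Module.Dual R A) :=
  {f | ∃ I : Ideal A, (∀ x ∈ I, ∀ a : A, x * a ∈ I) ∧
    Module.Finite R (A ⧸ I) ∧ ∀ x ∈ I, f x = 0}


private lemma pair_mul_expand {R A C : Type*} [CommRing R] [Ring A] [Algebra R A]
    [AddCommGroup C] [Module R C] [Coalgebra R C]
    (βP : A →ₗ[R] C →ₗ[R] R)
    (hm : ∀ a a' : A, βP (a * a') =
      (LinearMap.mul' R R) ∘ₗ (TensorProduct.map (βP a) (βP a')) ∘ₗ Coalgebra.comul)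
    (x y : A) (c : C) (S : Finset (C × C))
    (hS : (Coalgebra.comul (R := R) c : C ⊗[R] C) = ∑ p ∈ S, p.1 ⊗ₜ[R] p.2) :
    βP (x * y) c = ∑ p ∈ S, βP x p.1 * βP y p.2 := by
  have h := congrArg (fun g : C →ₗ[R] R => g c) (hm x y)
  simp only [LinearMap.comp_apply] at h
  rw [h, hS, map_sum, map_sum]
  simp [TensorProduct.map_tmul, LinearMap.mul'_apply]

private def annIdeal {R A C : Type*} [CommRing R] [Ring A] [Algebra R A]
    [AddCommGroup C] [Module R C]
    (βP : A →ₗ[R] C →ₗ[R] R) (c : C) : Ideal A where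
  carrier := {a | ∀ a' a'' : A, βP (a' * a * a'') c = 0}
  add_mem' := by
    intro a b ha hb a' a''
    have : a' * (a + b) * a'' = a' * a * a'' + a' * b * a'' := by noncomm_ring
    rw [this, map_add, LinearMap.add_apply, ha, hb, add_zero]
  zero_mem' := by intro a' a''; simp
  smul_mem' := by
    intro b a ha a' a''
    have : a' * (b • a) * a'' = (a' * b) * a * a'' := by
      rw [smul_eq_mul, ← mul_assoc]
    rw [this, ha]

private lemma mem_annIdeal_iff {R A C : Type*} [CommRing R] [Ring A] [Algebra R A]
    [AddCommGroup C] [Module R C]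
    (βP : A →ₗ[R] C →ₗ[R] R) (c : C) (a : A) :
    a ∈ annIdeal βP c ↔ ∀ a' a'' : A, βP (a' * a * a'') c = 0 := Iff.rfl

theorem range_eq_finiteDual_of_rational
    {R A C : Type*} [CommRing R] [Nontrivial R] [IsNoetherianRing R]
    [Ring A] [Algebra R A]
    [AddCommGroup C] [Module R C] [Coalgebra R C]
    (βP : A →ₗ[R] C →ₗ[R] R) (hP : IsMeasuring R βP) (hα : IsAlphaPairing βP)
    -- the left `A`-module `A°` is `C`-rational
    (hrat : ∀ f ∈ finiteDual R A,
      ∃ (n : ℕ) (fs : Fin n → Module.Dual R A) (cs : Fin n → C),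
        (∀ i, fs i ∈ finiteDual R A) ∧
        ∀ a : A, f ∘ₗ LinearMap.mulRight R a = ∑ i, βP a (cs i) • fs i) :
    -- then `χ_P(C) = A°`
    Set.range βP.flip = finiteDual R A := by
  refine Set.Subset.antisymm ?_ ?_
  · rintro _ ⟨c, rfl⟩
    obtain ⟨S, hS⟩ := TensorProduct.exists_finset (Coalgebra.comul (R := R) c)
    choose T hT using fun p : C × C =>
      TensorProduct.exists_finset (Coalgebra.comul (R := R) p.1)
    set I : Ideal A := annIdeal βP c with hI
    have hImem : ∀ a : A, a ∈ I ↔ ∀ a' a'' : A, βP (a' * a * a'') c = 0 :=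
      mem_annIdeal_iff βP c
    refine ⟨I, ?_, ?_, ?_⟩
    · intro x hx a a' a''
      have : a' * (x * a) * a'' = a' * x * (a * a'') := by
        rw [mul_assoc, mul_assoc, mul_assoc]
      rw [this]
      exact (hImem x).1 hx a' (a * a'')
    · classical
      let ι := (p : {p // p ∈ S}) × {q // q ∈ T p.1}
      let Φ : A →ₗ[R] (ι → R) := LinearMap.pi fun i => βP.flip i.2.1.2
      have hker : ∀ a : A, Φ a = 0 → a ∈ I := by
        intro a ha a' a''
        have h1 : βP ((a' * a) * a'') c = ∑ p ∈ S, βP (a' * a) p.1 * βP a'' p.2 :=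
          pair_mul_expand βP hP.1 _ _ c S hS
        rw [h1]
        refine Finset.sum_eq_zero fun p hp => ?_
        have h2 : βP (a' * a) p.1 = ∑ q ∈ T p, βP a' q.1 * βP a q.2 :=
          pair_mul_expand βP hP.1 _ _ p.1 (T p) (hT p)
        rw [h2, Finset.sum_mul]
        refine Finset.sum_eq_zero fun q hq => ?_
        have : βP a q.2 = 0 := congrFun ha ⟨⟨p, hp⟩, ⟨q, hq⟩⟩
        rw [this, mul_zero, zero_mul]
      have hfin : Module.Finite R ↥(LinearMap.range Φ) := by
        have : IsNoetherian R (ι → R) := inferInstance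
        exact ⟨Submodule.fg_top _ |>.mpr (IsNoetherian.noetherian _)⟩
      have e := Φ.quotKerEquivRange
      have hfinQ : Module.Finite R (A ⧸ LinearMap.ker Φ) :=
        Module.Finite.equiv e.symm
      let f : A →ₗ[R] A ⧸ I := (Submodule.mkQ I).restrictScalars R
      have hle : LinearMap.ker Φ ≤ LinearMap.ker f := by
        intro x hx
        simp only [LinearMap.mem_ker] at hx ⊢
        show Submodule.mkQ I x = 0
        rw [Submodule.mkQ_apply, Submodule.Quotient.mk_eq_zero]
        exact hker x hx
      let π := Submodule.liftQ (LinearMap.ker Φ) f hle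
      have hsurj : Function.Surjective π := by
        intro y
        obtain ⟨x, rfl⟩ := Submodule.mkQ_surjective I y
        exact ⟨Submodule.Quotient.mk x, rfl⟩
      exact Module.Finite.of_surjective π hsurj
    · intro x hx
      have := (hImem x).1 hx 1 1
      simpa using this
  · intro f hf
    obtain ⟨n, fs, cs, -, heq⟩ := hrat f hf
    refine ⟨∑ i, fs i 1 • cs i, ?_⟩
    ext a
    have h := congrArg (fun g : Module.Dual R A => g 1) (heq a)
    simp only [LinearMap.comp_apply, LinearMap.mulRight_apply, one_mul,
      LinearMap.sum_apply, LinearMap.smul_apply, smul_eq_mul] at h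
    simp only [map_sum, map_smul, LinearMap.sum_apply, LinearMap.smul_apply,
      LinearMap.flip_apply, smul_eq_mul]
    rw [h]
    exact Finset.sum_congr rfl fun i _ => mul_comm (fs i 1) (βP a (cs i))
end

section
/- Let R be a noetherian commutative ring, A an R-algebra, and I a left ideal of A with A/I finitely generated as an R-module. Then the two-sided ideal J := (I : A) = {a ∈ A : aA ⊆ I}, which equals the kernel of the R-algebra morphism φ_I: A → End_R(A/I), a ↦ (b + I ↦ ab + I), satisfies J ⊆ I and A/J is finitely generated as an R-module; i.e. every R-cofinite left ideal of A contains an R-cofinite two-sided ideal. -/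
theorem aux_cofinite_quot {R A : Type*} [CommRing R] [IsNoetherianRing R]
    [Ring A] [Algebra R A] (I J : Ideal A)
    (hJ : ∀ a : A, a ∈ J ↔ ∀ b : A, a * b ∈ I)
    (hI : Module.Finite R (A ⧸ I)) : Module.Finite R (A ⧸ J) := by
  let f : A →ₗ[R] Module.End R (A ⧸ I) :=
    (Algebra.lsmul R R (A ⧸ I)).toLinearMap
  have key : ∀ a b : A, f a (Submodule.Quotient.mk b)
      = (Submodule.Quotient.mk (a * b) : A ⧸ I) := by
    intro a b
    show a • (Submodule.Quotient.mk b : A ⧸ I) = _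
    rw [← Submodule.Quotient.mk_smul, smul_eq_mul]
  have hle : J.restrictScalars R ≤ LinearMap.ker f := by
    intro a ha
    refine LinearMap.mem_ker.2 (LinearMap.ext fun m => ?_)
    induction m using Submodule.Quotient.induction_on with
    | _ b =>
      rw [key a b, (Submodule.Quotient.mk_eq_zero I).2 (((hJ a).1 ha) b)]
      rfl
  have hge : LinearMap.ker f ≤ J.restrictScalars R := by
    intro a ha
    rw [Submodule.restrictScalars_mem, hJ a]
    intro b
    have h0 : f a (Submodule.Quotient.mk b) = 0 := by
      rw [LinearMap.mem_ker.1 ha]; rfl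
    rw [key a b] at h0
    exact (Submodule.Quotient.mk_eq_zero I).1 h0
  let g : (A ⧸ J.restrictScalars R) →ₗ[R] Module.End R (A ⧸ I) :=
    Submodule.liftQ (J.restrictScalars R) f hle
  have hg : Function.Injective g := by
    rw [← LinearMap.ker_eq_bot, Submodule.ker_liftQ, Submodule.eq_bot_iff]
    rintro x ⟨a', ha', rfl⟩
    simpa [Submodule.Quotient.mk_eq_zero] using hge ha'
  haveI : IsNoetherian R (A ⧸ I) := isNoetherian_of_isNoetherianRing_of_finite R _
  haveI : IsNoetherian R (Module.End R (A ⧸ I)) :=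
    isNoetherian_linearMap R (A ⧸ I) (A ⧸ I)
  have h1 : Module.Finite R (A ⧸ J.restrictScalars R) :=
    Module.Finite.of_injective g hg
  exact Module.Finite.equiv (Submodule.Quotient.restrictScalarsEquiv R J)

theorem cofinite_left_ideal_contains_cofinite_twoSided
    {R A : Type*} [CommRing R] [Nontrivial R] [IsNoetherianRing R]
    [Ring A] [Algebra R A]
    (I : Ideal A) (hI : Module.Finite R (A ⧸ I)) :
    ∃ J : Ideal A,
      -- `J = (I : A) = {a ∈ A : aA ⊆ I}` ...
      (J : Set A) = {a : A | ∀ b : A, a * b ∈ I} ∧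
      -- ... which is the kernel of `φ_I : A → End_R(A/I)`, `a ↦ (b + I ↦ ab + I)` ...
      (∀ a : A, a ∈ J ↔
        ∀ b : A, (Submodule.Quotient.mk (a * b) : A ⧸ I) = 0) ∧
      -- ... is a two-sided ideal ...
      (∀ x ∈ J, ∀ a : A, x * a ∈ J) ∧
      -- ... contained in `I` ...
      J ≤ I ∧
      -- ... and `A/J` is finitely generated as an `R`-module
      Module.Finite R (A ⧸ J) := by
  set J : Ideal A :=
    { carrier := {a : A | ∀ b : A, a * b ∈ I}
      add_mem' := fun ha hb c => by simpa [add_mul] using I.add_mem (ha c) (hb c)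
      zero_mem' := fun b => by simp
      smul_mem' := fun c a ha b => by
        simpa [smul_eq_mul, mul_assoc] using I.smul_mem c (ha b) } with hJ
  have hmem : ∀ a : A, a ∈ J ↔ ∀ b : A, a * b ∈ I := fun a => Iff.rfl
  refine ⟨J, rfl, ?_, ?_, ?_, ?_⟩
  · intro a
    simp only [hmem, Submodule.Quotient.mk_eq_zero]
  · intro x hx a b
    simpa [mul_assoc] using (hmem x).1 hx (a * b)
  · intro x hx
    simpa using (hmem x).1 hx 1
  · exact aux_cofinite_quot I J hmem hI
end

section
/- Let R be a noetherian commutative ring and A an R-algebra, and let A° = {f ∈ A^* : f(I) = 0 for some R-cofinite two-sided ideal I of A}. (1) If the canonical map λ_A: A → Hom_R(A°,R), a ↦ (f ↦ f(a)), is injective (A is proper), then ⋂{I : I an R-cofinite two-sided ideal of A} = 0. (2) If A is cofinitely R-cogenerated (A/I is R-cogenerated for every R-cofinite two-sided ideal I), then the converse also holds: ⋂{I : I R-cofinite two-sided ideal} = 0 implies λ_A injective. (3) If R is a QF ring (noetherian and injective as an R-module), then λ_A is injective if and only if ⋂{I : I R-cofinite two-sided ideal} = 0, if and only if A° is dense in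 A^* with respect to the finite topology. -/
/-- The finite topology on `A^* = Hom_R(A,R)`: the topology induced from the product
topology on `R^A`, where `R` carries the discrete topology. -/
def finiteTopology (R A : Type*) [CommRing R] [AddCommGroup A] [Module R A] :
    TopologicalSpace (Module.Dual R A) :=
  TopologicalSpace.induced (fun f : Module.Dual R A => (f : A → R))
    (@Pi.topologicalSpace A (fun _ => R) (fun _ => ⊥))

/-- An `R`-algebra `A` is *proper* if the canonical map
`λ_A : A → Hom_R(A°,R)`, `a ↦ (f ↦ f(a))`, is injective. -/
def IsProperAlgebra (R A : Type*) [CommRing R] [Ring A] [Algebra R A] : Prop :=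
  Function.Injective
    (fun (a : A) (f : finiteDual R A) => (f : Module.Dual R A) a)

/-!
Parts (1) and (2) are formal: an element of `A°` vanishes on some cofinite ideal, and a
functional on a cofinite quotient `A/I` pulls back to an element of `A°`.

For (3), a noetherian self-injective ring `R` is a cogenerator. If `x ≠ 0`, its annihilator
`J` is a proper ideal, and `J` has a nonzero annihilator `a`: otherwise `r ↦ (r j)ⱼ`, over
generators `j` of `J`, embeds `R` into `Rⁿ`, and a retraction, which exists by injectivity,
writes `1` as a combination of the `j`. Then `R/J ≅ Rx → R`, `1 ↦ a`, extends to the whole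
module. Density of `A°` follows by duality: if `f` cannot be matched on a finite set `S` by an
element of `A°`, some functional `ψ` on `Rˢ` kills the restrictions of `A°` but not that of
`f`, and `∑ ψ(eₛ) s ∈ A` is annihilated by `A°` but not by `f`.
-/

section

variable {R M : Type*} [CommRing R] [AddCommGroup M] [Module R M]

theorem Submodule.finite_quotient_inf [IsNoetherianRing R] {S : Type*} [Ring S] [Module S M]
    [SMul R S] [IsScalarTower R S M] {p q : Submodule S M} (hp : Module.Finite R (M ⧸ p))
    (hq : Module.Finite R (M ⧸ q)) : Module.Finite R (M ⧸ (p ⊓ q)) := by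
  have hker : LinearMap.ker (p.mkQ.prod q.mkQ) = p ⊓ q := by
    rw [LinearMap.ker_prod, ker_mkQ, ker_mkQ]
  let f : M ⧸ (p ⊓ q) →ₗ[S] (M ⧸ p) × (M ⧸ q) := (p ⊓ q).liftQ _ hker.ge
  have hf : Function.Injective f :=
    LinearMap.ker_eq_bot.mp (ker_liftQ_eq_bot' _ _ hker.symm)
  have := isNoetherian_of_injective (f.restrictScalars R) hf
  infer_instance

theorem Ideal.annihilator_ne_bot_of_fg [Module.Injective R R] {J : Ideal R} (hfg : J.FG)
    (hJ : J ≠ ⊤) : J.annihilator ≠ ⊥ := by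
  classical
  intro hann
  obtain ⟨s, rfl⟩ := hfg
  let F : R →ₗ[R] s → R := LinearMap.pi fun j => LinearMap.toSpanSingleton R R (j : R)
  have hF : Function.Injective F := by
    refine (injective_iff_map_eq_zero F).mpr fun r hr => ?_
    have : r ∈ (Submodule.span R (s : Set R)).annihilator :=
      (Submodule.mem_annihilator_span _ r).mpr fun j => congrFun hr j
    simpa [hann] using this
  obtain ⟨h, hh⟩ := Module.Injective.extension_property R R R (s → R) F hF LinearMap.id
  apply hJ
  rw [Ideal.eq_top_iff_one, ← LinearMap.id_apply (R := R) (1 : R), ← hh, LinearMap.comp_apply,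
    LinearMap.pi_apply_eq_sum_univ]
  refine Submodule.sum_mem _ fun j _ => ?_
  have hFj : F 1 j = j := by simp [F]
  rw [hFj, smul_eq_mul]
  exact Ideal.mul_mem_right _ _ (Submodule.subset_span j.2)

theorem exists_dual_apply_ne_zero_of_injective_self [IsNoetherianRing R] [Module.Injective R R]
    {x : M} (hx : x ≠ 0) : ∃ φ : Module.Dual R M, φ x ≠ 0 := by
  set J := LinearMap.ker (LinearMap.toSpanSingleton R M x)
  have hJ : J ≠ ⊤ := fun h => hx (by simpa [J] using (Ideal.eq_top_iff_one J).mp h)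
  obtain ⟨a, ha, ha0⟩ := Submodule.ne_bot_iff _ |>.mp
    (Ideal.annihilator_ne_bot_of_fg (IsNoetherian.noetherian J) hJ)
  let ι : R ⧸ J →ₗ[R] M := J.liftQ _ le_rfl
  have hι : Function.Injective ι := LinearMap.ker_eq_bot.mp (Submodule.ker_liftQ_eq_bot' _ _ rfl)
  let σ : R ⧸ J →ₗ[R] R := J.liftQ (LinearMap.toSpanSingleton R R a) fun c hc => by
    simpa [mul_comm] using (Submodule.mem_annihilator.mp ha) c hc
  obtain ⟨φ, hφ⟩ := Module.Injective.extension_property R R _ _ ι hι σ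
  have hφ1 := LinearMap.congr_fun hφ (Submodule.Quotient.mk 1)
  simp only [LinearMap.comp_apply, ι, σ, Submodule.liftQ_apply, LinearMap.toSpanSingleton_apply,
    one_smul] at hφ1
  exact ⟨φ, hφ1 ▸ ha0⟩

theorem dense_finiteTopology_iff {s : Set (Module.Dual R M)} :
    @Dense _ (finiteTopology R M) s ↔
      ∀ (f : Module.Dual R M) (S : Finset M), ∃ g ∈ s, ∀ a ∈ S, g a = f a := by
  let _ : TopologicalSpace R := ⊥
  have _ : DiscreteTopology R := ⟨rfl⟩
  let _ : TopologicalSpace (Module.Dual R M) := finiteTopology R M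
  constructor
  · intro hs f S
    have hU : IsOpen {g : Module.Dual R M | ∀ a ∈ S, g a = f a} :=
      isOpen_induced (f := fun g : Module.Dual R M => (g : M → R))
        (isOpen_set_pi S.finite_toSet fun a _ => isOpen_discrete {f a})
    exact hs.exists_mem_open hU ⟨f, fun _ _ => rfl⟩
  · intro h
    rw [dense_iff_inter_open]
    rintro U hU ⟨f, hfU⟩
    obtain ⟨V, hV, rfl⟩ := isOpen_induced_iff.mp hU
    obtain ⟨S, u, hSu, hsub⟩ := isOpen_pi_iff.mp hV _ hfU
    obtain ⟨g, hgs, hgf⟩ := h f S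
    refine ⟨g, hsub fun a ha => ?_, hgs⟩
    simpa [hgf a ha] using (hSu a ha).2

theorem eq_zero_of_dense_finiteTopology [IsNoetherianRing R] [Module.Injective R R]
    {s : Set (Module.Dual R M)} (hs : @Dense _ (finiteTopology R M) s) {x : M}
    (hx : ∀ f ∈ s, f x = 0) : x = 0 := by
  by_contra hx0
  obtain ⟨f, hf⟩ := exists_dual_apply_ne_zero_of_injective_self (R := R) hx0
  obtain ⟨g, hg, hgf⟩ := dense_finiteTopology_iff.mp hs f {x}
  exact hf (hgf x (Finset.mem_singleton_self x) ▸ hx g hg)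

theorem Submodule.dense_finiteTopology_of_separating [IsNoetherianRing R] [Module.Injective R R]
    (D : Submodule R (Module.Dual R M)) (hD : ∀ x : M, (∀ f ∈ D, f x = 0) → x = 0) :
    @Dense _ (finiteTopology R M) (D : Set (Module.Dual R M)) := by
  classical
  refine dense_finiteTopology_iff.mpr fun f S => ?_
  by_contra! hf
  let ev : Module.Dual R M →ₗ[R] S → R := LinearMap.pi fun a => Module.Dual.eval R M a
  have hfD : ev f ∉ D.map ev := by
    rintro ⟨g, hg, hgf⟩
    obtain ⟨a, ha, hne⟩ := hf g hg
    exact hne (congrFun hgf ⟨a, ha⟩)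
  obtain ⟨ψ, hψ⟩ := exists_dual_apply_ne_zero_of_injective_self (R := R)
    ((Submodule.Quotient.mk_eq_zero _).not.mpr hfD)
  let ψ' : Module.Dual R (S → R) := ψ ∘ₗ (D.map ev).mkQ
  let b : M := ∑ a : S, ψ' (fun a' => if a = a' then 1 else 0) • (a : M)
  have hb : ∀ g : Module.Dual R M, g b = ψ' (ev g) := by
    intro g
    simp [b, ev, LinearMap.pi_apply_eq_sum_univ ψ' (ev g), mul_comm]
  have hb0 : b = 0 := hD b fun g hg => by
    rw [hb, LinearMap.comp_apply, Submodule.mkQ_apply,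
      (Submodule.Quotient.mk_eq_zero _).mpr (Submodule.mem_map_of_mem hg), map_zero]
  have hfb := hb f
  rw [hb0, map_zero] at hfb
  exact hψ hfb.symm

end

section CofiniteIdeals

variable {R A : Type*} [CommRing R] [Ring A] [Algebra R A]

variable (R A) in
def IsCofinitelyCogenerated : Prop :=
  ∀ I : Ideal A, (∀ x ∈ I, ∀ b : A, x * b ∈ I) → Module.Finite R (A ⧸ I) →
    ∀ x : A ⧸ I, x ≠ 0 → ∃ φ : (A ⧸ I) →ₗ[R] R, φ x ≠ 0

theorem isProperAlgebra_iff :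
    IsProperAlgebra R A ↔ ∀ a : A, (∀ f ∈ finiteDual R A, f a = 0) → a = 0 := by
  constructor
  · intro h a ha
    exact h (funext fun f => (ha f f.2).trans (map_zero _).symm)
  · intro h a b hab
    rw [← sub_eq_zero]
    refine h _ fun f hf => ?_
    rw [map_sub, sub_eq_zero]
    exact congrFun hab ⟨f, hf⟩

theorem IsProperAlgebra.eq_zero_of_forall_mem (h : IsProperAlgebra R A) {a : A}
    (ha : ∀ I : Ideal A, (∀ x ∈ I, ∀ b : A, x * b ∈ I) → Module.Finite R (A ⧸ I) → a ∈ I) :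
    a = 0 :=
  isProperAlgebra_iff.mp h a fun _ ⟨I, hI, hfin, hf⟩ => hf a (ha I hI hfin)

theorem IsCofinitelyCogenerated.isProperAlgebra (hcog : IsCofinitelyCogenerated R A)
    (hsep : ∀ a : A, (∀ I : Ideal A, (∀ x ∈ I, ∀ b : A, x * b ∈ I) →
      Module.Finite R (A ⧸ I) → a ∈ I) → a = 0) :
    IsProperAlgebra R A := by
  refine isProperAlgebra_iff.mpr fun a ha => hsep a fun I hI hfin => ?_
  by_contra haI
  obtain ⟨φ, hφ⟩ := hcog I hI hfin _ ((Submodule.Quotient.mk_eq_zero I).not.mpr haI)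
  refine hφ (ha (φ ∘ₗ I.mkQ.restrictScalars R) ⟨I, hI, hfin, fun x hx => ?_⟩)
  simp [(Submodule.Quotient.mk_eq_zero I).mpr hx]

theorem isCofinitelyCogenerated_of_injective_self [IsNoetherianRing R] [Module.Injective R R] :
    IsCofinitelyCogenerated R A :=
  fun _ _ _ _ hx => exists_dual_apply_ne_zero_of_injective_self hx

variable (R A) in
def finiteDualSubmodule [IsNoetherianRing R] : Submodule R (Module.Dual R A) where
  carrier := finiteDual R A
  zero_mem' := ⟨⊤, fun _ _ _ => trivial, inferInstance, fun _ _ => rfl⟩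
  add_mem' := by
    rintro f g ⟨I, hI, hIfin, hf⟩ ⟨J, hJ, hJfin, hg⟩
    refine ⟨I ⊓ J, fun x hx b => ⟨hI x hx.1 b, hJ x hx.2 b⟩,
      Submodule.finite_quotient_inf hIfin hJfin, fun x hx => ?_⟩
    simp [hf x hx.1, hg x hx.2]
  smul_mem' := by
    rintro r f ⟨I, hI, hIfin, hf⟩
    exact ⟨I, hI, hIfin, fun x hx => by simp [hf x hx]⟩

end CofiniteIdeals

theorem proper_iff_intersection_of_cofinite_ideals_eq_bot_general
    {R A : Type*} [CommRing R] [IsNoetherianRing R]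
    [Ring A] [Algebra R A] :
    -- (1) if `A` is proper, then the intersection of all `R`-cofinite two-sided ideals
    -- of `A` is zero
    (IsProperAlgebra R A →
      ∀ a : A, (∀ I : Ideal A, (∀ x ∈ I, ∀ b : A, x * b ∈ I) →
        Module.Finite R (A ⧸ I) → a ∈ I) → a = 0) ∧
    -- (2) if `A` is cofinitely `R`-cogenerated, the converse holds
    ((∀ I : Ideal A, (∀ x ∈ I, ∀ b : A, x * b ∈ I) → Module.Finite R (A ⧸ I) →
        ∀ x : A ⧸ I, x ≠ 0 → ∃ φ : (A ⧸ I) →ₗ[R] R, φ x ≠ 0) →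
      (∀ a : A, (∀ I : Ideal A, (∀ x ∈ I, ∀ b : A, x * b ∈ I) →
        Module.Finite R (A ⧸ I) → a ∈ I) → a = 0) →
      IsProperAlgebra R A) ∧
    -- (3) if `R` is a QF ring, then: proper ↔ the intersection is zero ↔ `A°` is dense
    -- in `A^*` for the finite topology
    (Module.Injective R R →
      ((IsProperAlgebra R A ↔
        ∀ a : A, (∀ I : Ideal A, (∀ x ∈ I, ∀ b : A, x * b ∈ I) →
          Module.Finite R (A ⧸ I) → a ∈ I) → a = 0) ∧
       (IsProperAlgebra R A ↔
        @Dense (Module.Dual R A) (finiteTopology R A) (finiteDual R A)))) := by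
  refine ⟨fun h _ ha => h.eq_zero_of_forall_mem ha,
    IsCofinitelyCogenerated.isProperAlgebra, fun _ => ⟨?_, ?_⟩⟩
  · exact ⟨fun h _ ha => h.eq_zero_of_forall_mem ha,
      isCofinitelyCogenerated_of_injective_self.isProperAlgebra⟩
  · refine ⟨fun h => (finiteDualSubmodule R A).dense_finiteTopology_of_separating
      (isProperAlgebra_iff.mp h), fun hd => ?_⟩
    exact isProperAlgebra_iff.mpr fun a ha => eq_zero_of_dense_finiteTopology hd ha

theorem proper_iff_intersection_of_cofinite_ideals_eq_bot
    {R A : Type*} [CommRing R] [Nontrivial R] [IsNoetherianRing R]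
    [Ring A] [Algebra R A] :
    -- (1) if `A` is proper, then the intersection of all `R`-cofinite two-sided ideals
    -- of `A` is zero
    (IsProperAlgebra R A →
      ∀ a : A, (∀ I : Ideal A, (∀ x ∈ I, ∀ b : A, x * b ∈ I) →
        Module.Finite R (A ⧸ I) → a ∈ I) → a = 0) ∧
    -- (2) if `A` is cofinitely `R`-cogenerated, the converse holds
    ((∀ I : Ideal A, (∀ x ∈ I, ∀ b : A, x * b ∈ I) → Module.Finite R (A ⧸ I) →
        ∀ x : A ⧸ I, x ≠ 0 → ∃ φ : (A ⧸ I) →ₗ[R] R, φ x ≠ 0) →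
      (∀ a : A, (∀ I : Ideal A, (∀ x ∈ I, ∀ b : A, x * b ∈ I) →
        Module.Finite R (A ⧸ I) → a ∈ I) → a = 0) →
      IsProperAlgebra R A) ∧
    -- (3) if `R` is a QF ring, then: proper ↔ the intersection is zero ↔ `A°` is dense
    -- in `A^*` for the finite topology
    (Module.Injective R R →
      ((IsProperAlgebra R A ↔
        ∀ a : A, (∀ I : Ideal A, (∀ x ∈ I, ∀ b : A, x * b ∈ I) →
          Module.Finite R (A ⧸ I) → a ∈ I) → a = 0) ∧
       (IsProperAlgebra R A ↔
        @Dense (Module.Dual R A) (finiteTopology R A) (finiteDual R A)))) :=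
  proper_iff_intersection_of_cofinite_ideals_eq_bot_general
end

section
/- Let R be a commutative QF ring (noetherian and injective as a module over itself) and A a commutative noetherian R-algebra such that every maximal ideal of A is R-cofinite (A/𝔪 is finitely generated as an R-module for every maximal ideal 𝔪). Then ⋂{I : I ideal of A with A/I finitely generated as an R-module} = 0; equivalently, A° = {f ∈ A^* : f(I) = 0 for some R-cofinite ideal I} is dense in A^* with respect to the finite topology. -/
/-!
A noetherian self-injective ring is artinian: `ann (ann I) = I` for every ideal, so `I ↦ ann I`
is an order-reversing injection and the ascending chain condition turns into the descending one.

Powers of a cofinite ideal `𝔪` are cofinite, since each `𝔪ⁿ/𝔪ⁿ⁺¹` is a finite `A/𝔪`-module.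
So if `a ≠ 0` lies in every cofinite ideal and `𝔪 ⊇ ann a` is maximal, then `a ∈ ⋂ 𝔪ⁿ`, and
Krull's intersection theorem gives `r ∈ 𝔪` with `r a = a`; but then `1 - r ∈ ann a ⊆ 𝔪`.

For density, fix `f` and a finite `s ⊆ A`. The `R`-module `M = R s` is artinian, so some cofinite
`I` has minimal trace `M ∩ I`; since cofinite ideals are closed under products, this trace lies in
every cofinite ideal and hence vanishes. So `M` embeds into `A/I`, and `f|M` extends to a functional
on `A/I` because `R` is injective.
-/

/-- `A° = {f ∈ A^* : f(I) = 0` for some `R`-cofinite ideal `I` of `A}` (for a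
commutative algebra `A`). -/
def finiteDualComm (R : Type*) (A : Type*) [CommRing R] [CommRing A] [Algebra R A] :
    Set (Module.Dual R A) :=
  {f | ∃ I : Ideal A, Module.Finite R (A ⧸ I) ∧ ∀ x ∈ I, f x = 0}

section SelfInjective

variable {R : Type*} [CommRing R] [Module.Injective R R]

theorem Ideal.eq_top_of_fg_of_annihilator_eq_bot {J : Ideal R} (hJ : J.FG)
    (h : J.annihilator = ⊥) : J = ⊤ := by
  obtain ⟨n, v, rfl⟩ := Submodule.fg_iff_exists_fin_generating_family.mp hJ
  let φ : R →ₗ[R] (Fin n → R) := LinearMap.pi fun i => LinearMap.toSpanSingleton R R (v i)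
  have hφ : Function.Injective φ := by
    rw [← LinearMap.ker_eq_bot, eq_bot_iff, ← h]
    intro r hr
    rw [Submodule.mem_annihilator_span]
    rintro ⟨_, i, rfl⟩
    exact congrFun hr i
  obtain ⟨g, hg⟩ := Module.Injective.extension_property R R _ _ φ hφ LinearMap.id
  have hφ1 : φ 1 = v := funext fun i => by simp [φ]
  have hg1 : g v = 1 := by simpa [hφ1] using LinearMap.congr_fun hg 1
  rw [Ideal.eq_top_iff_one, ← hg1, LinearMap.pi_apply_eq_sum_univ]
  exact Ideal.sum_mem _ fun i _ => Ideal.mul_mem_right _ _ (Ideal.subset_span ⟨i, rfl⟩)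

theorem Ideal.annihilator_annihilator [IsNoetherianRing R] (I : Ideal R) :
    I.annihilator.annihilator = I := by
  refine le_antisymm (fun x hx => ?_) fun x hx => ?_
  · by_contra hxI
    let J := LinearMap.ker (I.mkQ ∘ₗ LinearMap.toSpanSingleton R R x)
    have hJ : J ≠ ⊤ := fun hJ => hxI <| by
      simpa [J, Ideal.Quotient.eq_zero_iff_mem] using
        LinearMap.congr_fun (LinearMap.ker_eq_top.mp hJ) 1
    obtain ⟨a, haJ, ha⟩ := Submodule.exists_mem_ne_zero_of_ne_bot
      (mt (Ideal.eq_top_of_fg_of_annihilator_eq_bot (IsNoetherian.noetherian J)) hJ)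
    -- `r ↦ r x` embeds `R ⧸ J` into `R ⧸ I`; extend `r ↦ r a` along it
    obtain ⟨φ, hφ⟩ := Module.Injective.extension_property R R _ _
      (J.liftQ _ le_rfl) (LinearMap.ker_eq_bot.mp (J.ker_liftQ_eq_bot' _ rfl))
      (J.liftQ (LinearMap.toSpanSingleton R R a) fun r hr => by
        simpa [mul_comm] using Submodule.mem_annihilator.mp haJ r hr)
    have hφr (r : R) : r * φ (I.mkQ 1) = φ (I.mkQ r) := by
      rw [← smul_eq_mul, ← map_smul, ← map_smul, smul_eq_mul, mul_one]
    have hc : φ (I.mkQ 1) ∈ I.annihilator := Submodule.mem_annihilator.mpr fun r hr => by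
      rw [smul_eq_mul, mul_comm, hφr, I.mkQ_apply, (Submodule.Quotient.mk_eq_zero I).mpr hr,
        map_zero]
    have hcx : x * φ (I.mkQ 1) = a := by
      have := LinearMap.congr_fun hφ (Submodule.Quotient.mk 1)
      simp only [LinearMap.comp_apply, Submodule.liftQ_apply, LinearMap.toSpanSingleton_apply,
        one_smul] at this
      rwa [hφr]
    exact ha (hcx ▸ Submodule.mem_annihilator.mp hx _ hc)
  · exact Submodule.mem_annihilator.mpr fun r hr => by
      simpa [mul_comm] using Submodule.mem_annihilator.mp hr x hx

theorem isArtinianRing_of_isNoetherianRing_of_injective [IsNoetherianRing R] :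
    IsArtinianRing R :=
  (Antitone.strictAnti_of_injective (fun _ _ => Submodule.annihilator_mono)
    (Function.LeftInverse.injective Ideal.annihilator_annihilator)).wellFoundedLT

end SelfInjective

section Cofinite

variable {R A : Type*} [CommRing R] [CommRing A] [Algebra R A]

theorem Module.Finite.of_isTorsionBySet {M : Type*} [AddCommGroup M] [Module R M] [Module A M]
    [IsScalarTower R A M] {I : Ideal A} [Module.Finite R (A ⧸ I)] [Module.Finite A M]
    (hM : Module.IsTorsionBySet A M I) : Module.Finite R M :=
  letI := hM.module
  haveI : Module.Finite (A ⧸ I) M := Module.Finite.of_restrictScalars_finite A _ _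
  Module.Finite.trans (A ⧸ I) M

theorem Module.Finite.quotient_ideal_mul {I J : Ideal A} [Module.Finite R (A ⧸ I)]
    [Module.Finite R (A ⧸ J)] (hJ : J.FG) : Module.Finite R (A ⧸ I * J) := by
  let N : Submodule A (A ⧸ I * J) := Submodule.map (I * J).mkQ J
  have : Module.Finite A N := Module.Finite.iff_fg.mpr (Submodule.FG.map _ hJ)
  have : Module.Finite R N := .of_isTorsionBySet (I := I) fun ⟨_, hy⟩ ⟨x, hx⟩ => by
    obtain ⟨y, hyJ, rfl⟩ := Submodule.mem_map.mp hy
    exact Subtype.ext <| (Submodule.Quotient.mk_eq_zero _).mpr <| by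
      simpa using Ideal.mul_mem_mul hx hyJ
  have : Module.Finite R ((A ⧸ I * J) ⧸ N.restrictScalars R) :=
    .equiv ((Submodule.Quotient.restrictScalarsEquiv R N).trans
      ((Submodule.quotientQuotientEquivQuotient _ _ Ideal.mul_le_right).restrictScalars R)).symm
  have : Module.Finite R (N.restrictScalars R) := ‹Module.Finite R N›
  exact .of_submodule_quotient (N.restrictScalars R)

theorem Module.Finite.quotient_ideal_pow {I : Ideal A} [Module.Finite R (A ⧸ I)] (hI : I.FG) :
    ∀ n : ℕ, Module.Finite R (A ⧸ I ^ n)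
  | 0 => by
    rw [pow_zero, Ideal.one_eq_top]
    infer_instance
  | n + 1 => by
    have := quotient_ideal_pow hI n
    rw [pow_succ']
    exact .quotient_ideal_mul hI.pow

theorem eq_zero_of_forall_finite_quotient_mem [IsNoetherianRing A]
    (hmax : ∀ 𝔪 : Ideal A, 𝔪.IsMaximal → Module.Finite R (A ⧸ 𝔪)) {a : A}
    (ha : ∀ I : Ideal A, Module.Finite R (A ⧸ I) → a ∈ I) : a = 0 := by
  by_contra ha0
  obtain ⟨𝔪, h𝔪, hann⟩ := Ideal.exists_le_maximal (Submodule.span A {a}).annihilator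
    fun h => ha0 <| by simpa using (Ideal.eq_top_iff_one _).mp h
  have := hmax 𝔪 h𝔪
  have ha𝔪 : a ∈ (⨅ n : ℕ, 𝔪 ^ n • ⊤ : Submodule A A) := Submodule.mem_iInf _ |>.mpr fun n => by
    simpa using ha _ (Module.Finite.quotient_ideal_pow (IsNoetherian.noetherian 𝔪) n)
  obtain ⟨r, hr⟩ := (𝔪.mem_iInf_smul_pow_eq_bot_iff a).mp ha𝔪
  have h1r : 1 - (r : A) ∈ 𝔪 := hann <| Submodule.mem_annihilator_span_singleton _ _ |>.mpr <| by
    rw [sub_smul, one_smul, hr, sub_self]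
  exact h𝔪.ne_top <| (Ideal.eq_top_iff_one _).mpr <| by simpa using 𝔪.add_mem h1r r.2

theorem exists_finite_quotient_disjoint [IsArtinianRing R] [IsNoetherianRing A]
    (h0 : ∀ a : A, (∀ I : Ideal A, Module.Finite R (A ⧸ I) → a ∈ I) → a = 0)
    (M : Submodule R A) [Module.Finite R M] :
    ∃ I : Ideal A, Module.Finite R (A ⧸ I) ∧ Disjoint M (I.restrictScalars R) := by
  let trace (I : Ideal A) : Submodule R M := (I.restrictScalars R).comap M.subtype
  obtain ⟨I₀, hI₀, hmin⟩ := (InvImage.wf trace wellFounded_lt).has_min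
    {I | Module.Finite R (A ⧸ I)} ⟨⊤, (inferInstance : Module.Finite R (A ⧸ (⊤ : Ideal A)))⟩
  refine ⟨I₀, hI₀, Submodule.disjoint_def.mpr fun x hxM hxI₀ => h0 x fun I hI => ?_⟩
  have : Module.Finite R (A ⧸ I₀) := hI₀
  have hprod : Module.Finite R (A ⧸ I₀ * I) := .quotient_ideal_mul (IsNoetherian.noetherian I)
  have htrace : trace (I₀ * I) = trace I₀ :=
    eq_of_le_of_not_lt (Submodule.comap_mono fun _ hx => Ideal.mul_le_left hx) (hmin _ hprod)
  have : (⟨x, hxM⟩ : M) ∈ trace (I₀ * I) := htrace ▸ hxI₀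
  exact Ideal.mul_le_right this

end Cofinite

theorem exists_dual_eqOn_of_disjoint {R A : Type*} [CommRing R] [Module.Injective R R]
    [CommRing A] [Algebra R A] {I : Ideal A} {M : Submodule R A}
    (hMI : Disjoint M (I.restrictScalars R)) (f : Module.Dual R A) :
    ∃ g : Module.Dual R A, (∀ x ∈ I, g x = 0) ∧ ∀ x ∈ M, g x = f x := by
  let π := (Ideal.Quotient.mkₐ R I).toLinearMap
  have hπM : Function.Injective (π ∘ₗ M.subtype) := by
    rw [← LinearMap.ker_eq_bot, LinearMap.ker_eq_bot']
    exact fun m hm => Subtype.ext <|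
      Submodule.disjoint_def.mp hMI _ m.2 (Ideal.Quotient.eq_zero_iff_mem.mp hm)
  obtain ⟨h, hh⟩ := Module.Injective.extension_property R R _ _ _ hπM (f ∘ₗ M.subtype)
  refine ⟨h ∘ₗ π, fun x hx => ?_, fun x hx => LinearMap.congr_fun hh ⟨x, hx⟩⟩
  simp [π, Ideal.Quotient.eq_zero_iff_mem.mpr hx]

theorem dense_finiteTopology_of_forall_finset {R A : Type*} [CommRing R] [AddCommGroup A]
    [Module R A] {S : Set (Module.Dual R A)}
    (h : ∀ (f : Module.Dual R A) (s : Finset A), ∃ g ∈ S, ∀ x ∈ s, g x = f x) :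
    @Dense _ (finiteTopology R A) S := by
  let _ : TopologicalSpace R := ⊥
  let _ := finiteTopology R A
  refine dense_iff_inter_open.mpr ?_
  rintro _ ⟨V, hV, rfl⟩ ⟨f, hfV⟩
  obtain ⟨s, u, hu, hsu⟩ := isOpen_pi_iff.mp hV _ hfV
  obtain ⟨g, hgS, hgf⟩ := h f s
  refine ⟨g, hsu fun x hx => ?_, hgS⟩
  show g x ∈ u x
  exact hgf x hx ▸ (hu x hx).2

theorem finiteDual_dense_of_maximal_ideals_cofinite_general
    {R A : Type*} [CommRing R]
    -- `R` is a QF ring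
    [IsNoetherianRing R] [Module.Injective R R]
    -- `A` is a commutative noetherian `R`-algebra
    [CommRing A] [Algebra R A] [IsNoetherianRing A]
    -- every maximal ideal of `A` is `R`-cofinite
    (hmax : ∀ 𝔪 : Ideal A, 𝔪.IsMaximal → Module.Finite R (A ⧸ 𝔪)) :
    -- then the intersection of all `R`-cofinite ideals of `A` is zero, ...
    (∀ a : A, (∀ I : Ideal A, Module.Finite R (A ⧸ I) → a ∈ I) → a = 0) ∧
    -- ... equivalently, `A°` is dense in `A^*` for the finite topology
    @Dense (Module.Dual R A) (finiteTopology R A) (finiteDualComm R A) := by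
  have h0 (a : A) := eq_zero_of_forall_finite_quotient_mem (a := a) hmax
  have := isArtinianRing_of_isNoetherianRing_of_injective (R := R)
  refine ⟨h0, dense_finiteTopology_of_forall_finset fun f s => ?_⟩
  obtain ⟨I, hI, hsI⟩ := exists_finite_quotient_disjoint h0 (Submodule.span R s)
  obtain ⟨g, hgI, hgf⟩ := exists_dual_eqOn_of_disjoint hsI f
  exact ⟨g, ⟨I, hI, hgI⟩, fun x hx => hgf x (Submodule.subset_span hx)⟩

theorem finiteDual_dense_of_maximal_ideals_cofinite
    {R A : Type*} [CommRing R] [Nontrivial R]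
    -- `R` is a QF ring
    [IsNoetherianRing R] [Module.Injective R R]
    -- `A` is a commutative noetherian `R`-algebra
    [CommRing A] [Algebra R A] [IsNoetherianRing A]
    -- every maximal ideal of `A` is `R`-cofinite
    (hmax : ∀ 𝔪 : Ideal A, 𝔪.IsMaximal → Module.Finite R (A ⧸ 𝔪)) :
    -- then the intersection of all `R`-cofinite ideals of `A` is zero, ...
    (∀ a : A, (∀ I : Ideal A, Module.Finite R (A ⧸ I) → a ∈ I) → a = 0) ∧
    -- ... equivalently, `A°` is dense in `A^*` for the finite topology
    @Dense (Module.Dual R A) (finiteTopology R A) (finiteDualComm R A) :=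
  finiteDual_dense_of_maximal_ideals_cofinite_general hmax
end

section
/- Let R be a noetherian commutative ring, A an R-algebra, M a right A-module, and regard M^* = Hom_R(M,R) as a left A-module via (a·f)(m) = f(ma). For f ∈ M^* the following are equivalent: (i) f(MI) = 0 for some two-sided ideal I of A with A/I finitely generated as an R-module; (ii) the R-submodule A·f ⊆ M^* is finitely generated as an R-module; (iii) f(L) = 0 for some right A-submodule L ⊆ M with M/L finitely generated as an R-module. -/
/-!
The orbit `A·f` is the image of `a ↦ a·f`, which factors through `A/I`. Conversely, evaluation on
`A·f` maps `M` into `(A·f)^*` with kernel the largest right submodule `L` on which `f` vanishes,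
and the action on `M/L` maps `A` into `End_R(M/L)` with kernel the annihilator of `M/L`, a
two-sided ideal `I` with `MI ⊆ L`. Over a noetherian ring, duals and endomorphism modules of
finite modules are finite, and so are their submodules, so these kernels are `R`-cofinite.
-/

open MulOpposite

section FiniteQuotient

variable {R S M P : Type*} [Ring R] [Ring S] [SMul R S]
  [AddCommGroup M] [Module R M] [Module S M] [IsScalarTower R S M]
  [AddCommGroup P] [Module R P] [IsNoetherian R P]

theorem Submodule.finite_quotient_of_mem_iff_eq_zero (p : Submodule S M) (θ : M →ₗ[R] P)
    (h : ∀ m, m ∈ p ↔ θ m = 0) : Module.Finite R (M ⧸ p) := by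
  have hker : p.restrictScalars R = LinearMap.ker θ := by ext m; exact h m
  have : (p.restrictScalars R).CoFG := hker ▸ Submodule.CoFG.ker θ
  exact Module.Finite.equiv (Submodule.Quotient.restrictScalarsEquiv R p)

end FiniteQuotient

section RightAnnihilator

variable (A : Type*) [Ring A] (N : Type*) [AddCommGroup N] [Module Aᵐᵒᵖ N]

def rightAnnihilator : Ideal A where
  carrier := {a | ∀ n : N, op a • n = 0}
  add_mem' ha hb n := by simp only [op_add, add_smul, ha n, hb n, add_zero]
  zero_mem' n := by simp only [op_zero, zero_smul]
  smul_mem' b a ha n := by rw [smul_eq_mul, op_mul, mul_smul, ha]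

variable {A N} in
theorem mul_mem_rightAnnihilator {x : A}
    (hx : x ∈ rightAnnihilator A N) (a : A) : x * a ∈ rightAnnihilator A N := fun n => by
  simp only [op_mul, mul_smul, hx n, smul_zero]

end RightAnnihilator

section RightModule

variable (R A : Type*) [CommRing R] [Ring A] [Algebra R A]
  {M : Type*} [AddCommGroup M] [Module R M] [Module Aᵐᵒᵖ M] [IsScalarTower R Aᵐᵒᵖ M]

def rightActionEnd (N : Type*) [AddCommGroup N] [Module R N] [Module Aᵐᵒᵖ N]
    [IsScalarTower R Aᵐᵒᵖ N] : A →ₗ[R] Module.End R N :=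
  (Algebra.lsmul R R N).toLinearMap ∘ₗ (opLinearEquiv R).toLinearMap

theorem finite_quotient_rightAnnihilator [IsNoetherianRing R] (N : Type*) [AddCommGroup N]
    [Module R N] [Module Aᵐᵒᵖ N] [IsScalarTower R Aᵐᵒᵖ N] [Module.Finite R N] :
    Module.Finite R (A ⧸ rightAnnihilator A N) :=
  Submodule.finite_quotient_of_mem_iff_eq_zero _ (rightActionEnd R A N) fun _ =>
    LinearMap.ext_iff (f := rightActionEnd R A N _) (g := 0) |>.symm

def dualOrbitMap (f : Module.Dual R M) : A →ₗ[R] Module.Dual R M :=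
  LinearMap.compRight R f ∘ₗ rightActionEnd R A M

theorem range_dualOrbitMap (f : Module.Dual R M) :
    LinearMap.range (dualOrbitMap R A f) = Submodule.span R (Set.range fun a : A =>
      f ∘ₗ DistribMulAction.toLinearMap R M (op a)) := by
  rw [← Submodule.span_eq (LinearMap.range _), LinearMap.coe_range]
  rfl

/-- The largest right submodule of `M` contained in `ker f`. -/
def kerCore (f : Module.Dual R M) : Submodule Aᵐᵒᵖ M where
  carrier := {m | ∀ a : A, f (op a • m) = 0}
  add_mem' hm hm' a := by simp only [smul_add, map_add, hm a, hm' a, add_zero]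
  zero_mem' a := by simp only [smul_zero, map_zero]
  smul_mem' b m hm a := by
    simpa only [op_mul, op_unop, mul_smul] using hm (b.unop * a)

variable {R A}

theorem fg_range_dualOrbitMap {f : Module.Dual R M} (I : Ideal A)
    [Module.Finite R (A ⧸ I)] (hI : ∀ m : M, ∀ x ∈ I, f (op x • m) = 0) :
    (LinearMap.range (dualOrbitMap R A f)).FG := by
  have hle : I.restrictScalars R ≤ LinearMap.ker (dualOrbitMap R A f) :=
    fun x hx => LinearMap.ext fun m => hI m x hx
  have hI : (I.restrictScalars R).CoFG :=
    Module.Finite.equiv (Submodule.Quotient.restrictScalarsEquiv R I).symm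
  exact Submodule.range_fg_iff_ker_cofg.mpr (hI.of_le hle)

theorem finite_quotient_kerCore [IsNoetherianRing R] {f : Module.Dual R M}
    (hfg : (LinearMap.range (dualOrbitMap R A f)).FG) : Module.Finite R (M ⧸ kerCore R A f) := by
  set V := LinearMap.range (dualOrbitMap R A f)
  have : Module.Finite R V := Module.Finite.iff_fg.mpr hfg
  have := isNoetherian_linearMap R R V
  refine Submodule.finite_quotient_of_mem_iff_eq_zero _
    (V.subtype.dualMap ∘ₗ Module.Dual.eval R M) fun m => ?_
  rw [LinearMap.ext_iff]
  exact ⟨fun hm ⟨_, a, ha⟩ => ha ▸ hm a, fun hm a => hm ⟨_, a, rfl⟩⟩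

end RightModule

theorem rational_functional_characterizations_general
    {R A M : Type*} [CommRing R] [IsNoetherianRing R]
    [Ring A] [Algebra R A]
    -- `M` is a right `A`-module (a left `Aᵐᵒᵖ`-module) which is also an `R`-module
    [AddCommGroup M] [Module R M] [Module Aᵐᵒᵖ M] [IsScalarTower R Aᵐᵒᵖ M]
    (f : Module.Dual R M) :
    -- (i) `f(MI) = 0` for some `R`-cofinite two-sided ideal `I` of `A`
    ((∃ I : Ideal A, (∀ x ∈ I, ∀ a : A, x * a ∈ I) ∧ Module.Finite R (A ⧸ I) ∧
        ∀ m : M, ∀ x ∈ I, f (MulOpposite.op x • m) = 0) ↔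
      -- (ii) `A·f ⊆ M^*`, where `(a·f)(m) = f(m·a)`, is finitely generated over `R`
      (Submodule.span R (Set.range fun a : A =>
        f ∘ₗ DistribMulAction.toLinearMap R M (MulOpposite.op a))).FG) ∧
    ((Submodule.span R (Set.range fun a : A =>
        f ∘ₗ DistribMulAction.toLinearMap R M (MulOpposite.op a))).FG ↔
      -- (iii) `f(L) = 0` for some `R`-cofinite right `A`-submodule `L ⊆ M`
      (∃ L : Submodule Aᵐᵒᵖ M, Module.Finite R (M ⧸ L) ∧ ∀ m ∈ L, f m = 0)) := by
  rw [← range_dualOrbitMap]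
  have h12 : (∃ I : Ideal A, (∀ x ∈ I, ∀ a : A, x * a ∈ I) ∧ Module.Finite R (A ⧸ I) ∧
      ∀ m : M, ∀ x ∈ I, f (op x • m) = 0) → (LinearMap.range (dualOrbitMap R A f)).FG :=
    fun ⟨I, _, _, hI⟩ => fg_range_dualOrbitMap I hI
  have h23 (hfg : (LinearMap.range (dualOrbitMap R A f)).FG) :
      ∃ L : Submodule Aᵐᵒᵖ M, Module.Finite R (M ⧸ L) ∧ ∀ m ∈ L, f m = 0 :=
    ⟨kerCore R A f, finite_quotient_kerCore hfg, fun m hm => by simpa only [op_one, one_smul] using hm 1⟩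
  have h31 : (∃ L : Submodule Aᵐᵒᵖ M, Module.Finite R (M ⧸ L) ∧ ∀ m ∈ L, f m = 0) →
      ∃ I : Ideal A, (∀ x ∈ I, ∀ a : A, x * a ∈ I) ∧ Module.Finite R (A ⧸ I) ∧
        ∀ m : M, ∀ x ∈ I, f (op x • m) = 0 := by
    rintro ⟨L, _, hL⟩
    refine ⟨rightAnnihilator A (M ⧸ L), fun x hx => mul_mem_rightAnnihilator hx,
      finite_quotient_rightAnnihilator R A (M ⧸ L), fun m x hx => hL _ ?_⟩
    rw [← Submodule.Quotient.mk_eq_zero, Submodule.Quotient.mk_smul]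
    exact hx _
  exact ⟨⟨h12, h31 ∘ h23⟩, ⟨h23, h12 ∘ h31⟩⟩

theorem rational_functional_characterizations
    {R A M : Type*} [CommRing R] [Nontrivial R] [IsNoetherianRing R]
    [Ring A] [Algebra R A]
    -- `M` is a right `A`-module (a left `Aᵐᵒᵖ`-module) which is also an `R`-module
    [AddCommGroup M] [Module R M] [Module Aᵐᵒᵖ M] [IsScalarTower R Aᵐᵒᵖ M]
    (f : Module.Dual R M) :
    -- (i) `f(MI) = 0` for some `R`-cofinite two-sided ideal `I` of `A`
    ((∃ I : Ideal A, (∀ x ∈ I, ∀ a : A, x * a ∈ I) ∧ Module.Finite R (A ⧸ I) ∧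
        ∀ m : M, ∀ x ∈ I, f (MulOpposite.op x • m) = 0) ↔
      -- (ii) `A·f ⊆ M^*`, where `(a·f)(m) = f(m·a)`, is finitely generated over `R`
      (Submodule.span R (Set.range fun a : A =>
        f ∘ₗ DistribMulAction.toLinearMap R M (MulOpposite.op a))).FG) ∧
    ((Submodule.span R (Set.range fun a : A =>
        f ∘ₗ DistribMulAction.toLinearMap R M (MulOpposite.op a))).FG ↔
      -- (iii) `f(L) = 0` for some `R`-cofinite right `A`-submodule `L ⊆ M`
      (∃ L : Submodule Aᵐᵒᵖ M, Module.Finite R (M ⧸ L) ∧ ∀ m ∈ L, f m = 0)) :=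
  rational_functional_characterizations_general f
end

section
/- Let R be a noetherian commutative ring, A an R-algebra, A° = {f ∈ A^* : f(I) = 0 for some R-cofinite two-sided ideal I of A} with left A-action (a⇀f)(ã) = f(ã a), and let M be a left A-module. (1) If m ∈ M is such that there exists a finite subset W = {f_1,…,f_k} ⊆ A° with {a ∈ A : a⇀f_i = 0 for i = 1,…,k} ⊆ {a ∈ A : am = 0}, then the R-submodule Am ⊆ M is finitely generated as an R-module. (2) Conversely, if A is cofinitely R-cogenerated (A/I is R-cogenerated for every R-cofinite two-sided ideal I) and Am is finitely generated as an R-module, then such a finite subset W ⊆ A° exists. -/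
section Aux

variable {R A M : Type*} [CommRing R] [Ring A] [Algebra R A]
  [AddCommGroup M] [Module R M] [Module A M] [IsScalarTower R A M]

lemma aux_smul_comm (r : R) (a : A) (x : M) : a • (r • x) = r • (a • x) := by
  have h1 : r • x = (r • (1 : A)) • x := by rw [smul_assoc, one_smul]
  rw [h1, smul_smul, mul_smul_comm, mul_one, smul_assoc]

end Aux

set_option maxHeartbeats 1000000 in
theorem locally_finite_iff_finiteDual_annihilator
    {R A M : Type*} [CommRing R] [Nontrivial R] [IsNoetherianRing R]
    [Ring A] [Algebra R A]
    [AddCommGroup M] [Module R M] [Module A M] [IsScalarTower R A M]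
    (m : M) :
    -- (1) if there is a finite subset `W = {f_1,…,f_k} ⊆ A°` with
    -- `{a : a⇀f_i = 0 ∀ i} ⊆ {a : am = 0}`, then `Am` is a finitely generated
    -- `R`-module
    ((∃ (k : ℕ) (fs : Fin k → Module.Dual R A),
        (∀ i, fs i ∈ finiteDual R A) ∧
        ∀ a : A, (∀ i, fs i ∘ₗ LinearMap.mulRight R a = 0) → a • m = 0) →
      (Submodule.span R (Set.range fun a : A => a • m)).FG) ∧
    -- (2) conversely, if `A` is cofinitely `R`-cogenerated and `Am` is a finitely
    -- generated `R`-module, then such a finite subset of `A°` exists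
    ((∀ I : Ideal A, (∀ x ∈ I, ∀ b : A, x * b ∈ I) → Module.Finite R (A ⧸ I) →
        ∀ x : A ⧸ I, x ≠ 0 → ∃ φ : (A ⧸ I) →ₗ[R] R, φ x ≠ 0) →
      (Submodule.span R (Set.range fun a : A => a • m)).FG →
      ∃ (k : ℕ) (fs : Fin k → Module.Dual R A),
        (∀ i, fs i ∈ finiteDual R A) ∧
        ∀ a : A, (∀ i, fs i ∘ₗ LinearMap.mulRight R a = 0) → a • m = 0) := by
  classical
  -- the `A`-linear map `a ↦ a • m`
  set ℓ : A →ₗ[A] M := LinearMap.toSpanSingleton A M m with hℓ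
  have hℓa : ∀ a : A, ℓ a = a • m := fun a => rfl
  have hspan : Submodule.span R (Set.range fun a : A => a • m)
      = LinearMap.range (ℓ.restrictScalars R) := by
    apply le_antisymm
    · rw [Submodule.span_le]
      rintro _ ⟨a, rfl⟩
      exact ⟨a, rfl⟩
    · rintro x ⟨a, rfl⟩
      exact Submodule.subset_span ⟨a, rfl⟩
  constructor
  · -- Part (1)
    rintro ⟨k, fs, hmem, hann⟩
    choose I hI2 hIfin hIvan using fun i => hmem i
    set J : Ideal A := ⨅ i, I i with hJ
    -- elements of J annihilate m
    have hJm : J ≤ LinearMap.ker ℓ := by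
      intro a ha
      rw [LinearMap.mem_ker, hℓa]
      apply hann
      intro i
      ext b
      simp only [LinearMap.comp_apply, LinearMap.mulRight_apply, LinearMap.zero_apply]
      exact hIvan i _ (Ideal.mul_mem_left _ b ((Submodule.mem_iInf _).1 ha i))
    haveI : ∀ i, Module.Finite R (A ⧸ I i) := hIfin
    haveI : ∀ i, IsNoetherian R (A ⧸ I i) := fun i =>
      isNoetherian_of_isNoetherianRing_of_finite R _
    haveI : IsNoetherian R (∀ i, A ⧸ I i) := isNoetherian_pi
    -- `A ⧸ J` is a finite `R`-module
    haveI : Module.Finite R (A ⧸ J) := by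
      set p : A →ₗ[A] (∀ i, A ⧸ I i) := LinearMap.pi fun i => (I i).mkQ with hp
      have hker : J = LinearMap.ker p := by
        rw [hp, LinearMap.ker_pi, hJ]
        simp [Submodule.ker_mkQ]
      have hinj : Function.Injective (J.liftQ p (le_of_eq hker)) := by
        rw [← LinearMap.ker_eq_bot]
        exact Submodule.ker_liftQ_eq_bot _ _ _ (le_of_eq hker.symm)
      exact Module.Finite.of_injective ((J.liftQ p (le_of_eq hker)).restrictScalars R) hinj
    -- factor ℓ through A ⧸ J
    set g : A ⧸ J →ₗ[A] M := J.liftQ ℓ hJm with hg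
    have hcomp : ℓ.restrictScalars R
        = (g.restrictScalars R).comp (J.mkQ.restrictScalars R) := by
      ext a
      simp [hg, Submodule.liftQ_apply]
    rw [hspan, hcomp, LinearMap.range_comp_of_range_eq_top, ← Submodule.map_top]
    · exact Submodule.FG.map _ (Module.finite_def.mp inferInstance)
    · rw [LinearMap.range_eq_top]
      exact J.mkQ_surjective
  · -- Part (2)
    intro hcog hFG
    set N : Submodule R M := Submodule.span R (Set.range fun a : A => a • m) with hN
    have hmN : m ∈ N := Submodule.subset_span ⟨1, one_smul A m⟩
    have hstab : ∀ (a : A) (x : M), x ∈ N → a • x ∈ N := by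
      intro a x hx
      induction hx using Submodule.span_induction with
      | mem x hx =>
          obtain ⟨b, rfl⟩ := hx
          have : a • b • m = (a * b) • m := (mul_smul a b m).symm
          rw [this]
          exact Submodule.subset_span ⟨a * b, rfl⟩
      | zero => rw [smul_zero]; exact N.zero_mem
      | add x y _ _ hx hy => rw [smul_add]; exact N.add_mem hx hy
      | smul r x _ hx => rw [aux_smul_comm]; exact N.smul_mem r hx
    -- the annihilator ideal of N
    set I : Ideal A :=
      { carrier := {a : A | ∀ x ∈ N, a • x = 0}
        add_mem' := fun {a b} ha hb x hx => by rw [add_smul, ha x hx, hb x hx, add_zero]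
        zero_mem' := fun x _ => zero_smul A x
        smul_mem' := fun b a ha x hx => by
          rw [smul_eq_mul, mul_smul, ha x hx, smul_zero] } with hI
    have hI2 : ∀ x ∈ I, ∀ b : A, x * b ∈ I := by
      intro x hx b y hy
      rw [mul_smul]
      exact hx _ (hstab b y hy)
    have hmemI : ∀ a ∈ I, a • m = 0 := fun a ha => ha m hmN
    -- `A ⧸ I` is a finite `R`-module
    obtain ⟨s, hs⟩ := hFG
    haveI : Module.Finite R N := Module.Finite.iff_fg.mpr ⟨s, hs⟩
    haveI : IsNoetherian R N := isNoetherian_of_isNoetherianRing_of_finite R _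
    haveI : IsNoetherian R (s → N) := isNoetherian_pi
    set Φ : A →ₗ[R] (s → N) :=
      { toFun := fun a j => ⟨a • (j : M),
          hstab a _ (hs ▸ Submodule.subset_span (Finset.mem_coe.2 j.2))⟩
        map_add' := fun a b => funext fun j => Subtype.ext (add_smul a b _)
        map_smul' := fun r a => funext fun j => Subtype.ext (smul_assoc r a _) } with hΦ
    have hker : LinearMap.ker Φ = I.restrictScalars R := by
      ext a
      simp only [LinearMap.mem_ker, Submodule.restrictScalars_mem]
      constructor
      · intro h x hx
        have h' : ∀ j : s, a • (j : M) = 0 := fun j =>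
          congrArg Subtype.val (congrFun h j)
        rw [← hs] at hx
        induction hx using Submodule.span_induction with
        | mem x hx => exact h' ⟨x, Finset.mem_coe.1 hx⟩
        | zero => rw [smul_zero]
        | add x y _ _ hx hy => rw [smul_add, hx, hy, add_zero]
        | smul r x _ hx => rw [aux_smul_comm, hx, smul_zero]
      · intro h
        funext j
        exact Subtype.ext (h _ (hs ▸ Submodule.subset_span (Finset.mem_coe.2 j.2)))
    haveI : Module.Finite R (A ⧸ I) := by
      have hinj : Function.Injective
          ((I.restrictScalars R).liftQ Φ (le_of_eq hker.symm)) := by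
        rw [← LinearMap.ker_eq_bot]
        exact Submodule.ker_liftQ_eq_bot _ _ _ (le_of_eq hker)
      haveI : Module.Finite R (A ⧸ I.restrictScalars R) :=
        Module.Finite.of_injective _ hinj
      exact Module.Finite.equiv (Submodule.Quotient.restrictScalarsEquiv R I)
    clear_value Φ I N
    -- the dual of `A ⧸ I` is a finite `R`-module
    obtain ⟨n, p, hp⟩ := Module.Finite.exists_fin' R (A ⧸ I)
    haveI : IsNoetherian R (Fin n → R) := isNoetherian_pi
    haveI : IsNoetherian R ((Fin n → R) →ₗ[R] R) :=
      isNoetherian_of_linearEquiv (LinearEquiv.piRing R R (Fin n) R).symm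
    let Ψ : Module.Dual R (A ⧸ I) →ₗ[R] ((Fin n → R) →ₗ[R] R) :=
      { toFun := fun ψ => ψ.comp p
        map_add' := fun ψ χ => LinearMap.add_comp _ _ _
        map_smul' := fun r ψ => LinearMap.smul_comp _ _ _ }
    have hlinj : Function.Injective Ψ := by
      intro φ ψ h
      ext x
      obtain ⟨y, rfl⟩ := hp x
      exact congrFun (congrArg DFunLike.coe h) y
    haveI : IsNoetherian R (Module.Dual R (A ⧸ I)) :=
      isNoetherian_of_injective Ψ hlinj
    haveI : Module.Finite R (Module.Dual R (A ⧸ I)) :=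
      ⟨IsNoetherian.noetherian ⊤⟩
    obtain ⟨k, φ, hφ⟩ := Module.Finite.exists_fin (R := R) (M := Module.Dual R (A ⧸ I))
    refine ⟨k, fun i => (φ i).comp (I.mkQ.restrictScalars R), fun i =>
      ⟨I, hI2, inferInstance, fun x hx => ?_⟩, fun a ha => ?_⟩
    · simp only [LinearMap.comp_apply, LinearMap.restrictScalars_apply, Submodule.mkQ_apply]
      rw [(Submodule.Quotient.mk_eq_zero I).2 hx, map_zero]
    · -- every generator of the dual kills `mk a`
      have h1 : ∀ i, φ i (Submodule.Quotient.mk a) = 0 := by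
        intro i
        have := congrFun (congrArg DFunLike.coe (ha i)) 1
        simpa using this
      have h2 : ∀ ψ : Module.Dual R (A ⧸ I), ψ (Submodule.Quotient.mk a) = 0 := by
        intro ψ
        have hψ : ψ ∈ Submodule.span R (Set.range φ) := by rw [hφ]; trivial
        induction hψ using Submodule.span_induction with
        | mem ψ hψ => obtain ⟨i, rfl⟩ := hψ; exact h1 i
        | zero => rfl
        | add ψ χ _ _ hψ hχ => simp [hψ, hχ]
        | smul r ψ _ hψ => simp [hψ]
      have hmk : (Submodule.Quotient.mk a : A ⧸ I) = 0 := by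
        by_contra hne
        obtain ⟨ψ, hψ⟩ := hcog I hI2 inferInstance _ hne
        exact hψ (h2 ψ)
      exact hmemI a ((Submodule.Quotient.mk_eq_zero I).1 hmk)
end
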